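/- (ℤ₂×ℤ₂ grading) Let (a,b,c) ∈ ℕ³ be admissible and suppose p is a polynomial in three variables y, x, z over ℂ satisfying χ_{a,b}^c(x₁,x₂) = p(tr(x₂), tr(x₁), tr(x₁x₂⁻¹)) for all x₁, x₂ ∈ SL(2,ℂ). Then every monomial y^j x^i z^k occurring with nonzero coefficient in p satisfies i + k ≡ a (mod 2) and j + k ≡ b (mod 2). -/

import Mathlib

open Matrix Finset

noncomputable section

abbrev SL2 : Type := Matrix.SpecialLinearGroup (Fin 2) ℂ

/-- Matrix entry of the representation ρₙ on Vₙ in the basis `n_k = X^k Y^{n-k}`: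
`rhoFun n g l k` is the coefficient of `X^l Y^{n-l}` in
`(g₁₁ X + g₂₁ Y)^k (g₁₂ X + g₂₂ Y)^{n-k}`. -/
def rhoFun (n : ℕ) (g : SL2) (l k : ℕ) : ℂ :=
  MvPolynomial.coeff (Finsupp.single (0 : Fin 2) l + Finsupp.single (1 : Fin 2) (n - l))
    (MvPolynomial.aeval
      ![MvPolynomial.C (g.1 0 0) * MvPolynomial.X (0 : Fin 2) +
          MvPolynomial.C (g.1 1 0) * MvPolynomial.X 1,
        MvPolynomial.C (g.1 0 1) * MvPolynomial.X 0 +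
          MvPolynomial.C (g.1 1 1) * MvPolynomial.X 1]
      ((MvPolynomial.X (0 : Fin 2) : MvPolynomial (Fin 2) ℂ) ^ k * MvPolynomial.X 1 ^ (n - k)))

/-- A triple `(a,b,c)` of naturals is admissible: `(−a+b+c)/2, (a−b+c)/2, (a+b−c)/2 ∈ ℕ`. -/
def Admissible (a b c : ℕ) : Prop :=
  a ≤ b + c ∧ b ≤ a + c ∧ c ≤ a + b ∧ (a + b + c) % 2 = 0

instance : ∀ a b c : ℕ, Decidable (Admissible a b c) := fun a b c => by
  unfold Admissible; infer_instance

/-- The coefficient of `a_p ⊗ b_q` in `ι(c_k)`, where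
`ι : V_c → V_a ⊗ V_b` is the Clebsch-Gordan injection
`ι(c_k) = C(c,k)⁻¹ Σ (−1)^m C(β,i) C(α,j) C(γ,m) a_{i+γ−m} ⊗ b_{j+m}`
(with `α = (−a+b+c)/2`, `β = (a−b+c)/2`, `γ = (a+b−c)/2`). -/
def iotaCoeff (a b c k p q : ℕ) : ℂ :=
  ((c.choose k : ℂ))⁻¹ *
    ∑ i ∈ Finset.range ((a + c - b) / 2 + 1),
      ∑ j ∈ Finset.range ((b + c - a) / 2 + 1),
        ∑ m ∈ Finset.range ((a + b - c) / 2 + 1),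
          if i + j = k ∧ p = i + (a + b - c) / 2 - m ∧ q = j + m then
            (-1 : ℂ) ^ m * (((a + c - b) / 2).choose i : ℂ) *
              (((b + c - a) / 2).choose j : ℂ) * (((a + b - c) / 2).choose m : ℂ)
          else 0

/-- `Tcoeff a b c x₁ x₂ k p q` is the coefficient of `a_p ⊗ b_q` in
`(ρ_a(x₁) ⊗ ρ_b(x₂))(ι(c_k))`. -/
def Tcoeff (a b c : ℕ) (x₁ x₂ : SL2) (k p q : ℕ) : ℂ :=
  ∑ p' ∈ Finset.range (a + 1), ∑ q' ∈ Finset.range (b + 1),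
    rhoFun a x₁ p p' * rhoFun b x₂ q q' * iotaCoeff a b c k p' q'

/-- The central function `χ_{a,b}^c : SL(2,ℂ) × SL(2,ℂ) → ℂ`, defined to be `0` when
`(a,b,c)` is not admissible. -/
def centralFn (a b c : ℕ) (x₁ x₂ : SL2) : ℂ :=
  if Admissible a b c then
    ∑ k ∈ Finset.range (c + 1),
      ∑ i ∈ Finset.range ((a + c - b) / 2 + 1),
        ∑ j ∈ Finset.range ((b + c - a) / 2 + 1),
          ∑ m ∈ Finset.range ((a + b - c) / 2 + 1),
            if i + j = k then
              (-1 : ℂ) ^ m * (((a + c - b) / 2).choose i : ℂ) *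
                  (((b + c - a) / 2).choose j : ℂ) * (((a + b - c) / 2).choose m : ℂ) /
                  ((a.choose (i + (a + b - c) / 2 - m) : ℂ) * (b.choose (j + m) : ℂ)) *
                Tcoeff a b c x₁ x₂ k (i + (a + b - c) / 2 - m) (j + m)
            else 0
  else 0

/-!
Negating `x₁` multiplies `ρ_a(x₁)`, hence `χ_{a,b}^c(x₁, x₂)`, by `(-1)^a`, while it changes the
signs of `tr x₁` and `tr (x₁ x₂⁻¹)` and fixes `tr x₂`; likewise negating `x₂` gives `(-1)^b`.
Since every triple in `ℂ³` is a triple of traces, `p(y, -x, -z) = (-1)^a p(y, x, z)` and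
`p(-y, x, -z) = (-1)^b p(y, x, z)` hold identically, and comparing the coefficients of
`y^j x^i z^k` gives `(-1)^(i+k) = (-1)^a` and `(-1)^(j+k) = (-1)^b`.
-/

namespace MvPolynomial

variable {R σ : Type*}

theorem coeff_aeval_C_mul_X [CommSemiring R] (ε : σ → R) (p : MvPolynomial σ R)
    (d : σ →₀ ℕ) :
    coeff d (aeval (fun i => C (ε i) * X i) p) = (d.prod fun i k => ε i ^ k) * coeff d p := by
  classical
  induction p using induction_on' with
  | monomial s a =>
    have hmono : aeval (fun i => C (ε i) * X i) (monomial s a) =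
        monomial s (a * s.prod fun i k => ε i ^ k) := by
      rw [aeval_monomial, algebraMap_eq, monomial_eq, C_mul]
      simp only [mul_pow, ← C_pow, Finsupp.prod_mul, ← map_finsuppProd C]
      ring
    rw [hmono, coeff_monomial, coeff_monomial]
    split_ifs with h
    · rw [h, mul_comm]
    · rw [mul_zero]
  | add p q hp hq => rw [map_add, coeff_add, coeff_add, hp, hq, mul_add]

theorem prod_pow_eq_of_eval_mul_eq [CommRing R] [IsDomain R] [Infinite R]
    {p : MvPolynomial σ R} {ε : σ → R} {s : R}
    (h : ∀ v : σ → R, eval (fun i => ε i * v i) p = s * eval v p)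
    {d : σ →₀ ℕ} (hd : d ∈ p.support) : (d.prod fun i k => ε i ^ k) = s := by
  have hscale : aeval (fun i => C (ε i) * X i) p = C s * p := funext fun v => by
    rw [aeval_eq_bind₁, eval_mul, eval_C, ← h v]
    exact (eval₂Hom_bind₁ _ _ _ _).trans (by simp)
  have := congrArg (coeff d) hscale
  rw [coeff_aeval_C_mul_X, coeff_C_mul] at this
  exact mul_right_cancel₀ (mem_support_iff.mp hd) this

theorem eval_mul_eq_of_surjective [CommSemiring R] {X : Type*} {f : X → σ → R}
    (hf : Function.Surjective f) {χ : X → R} {p : MvPolynomial σ R}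
    (hp : ∀ x, χ x = eval (f x) p) {g : X → X} {ε : σ → R} {s : R}
    (hfg : ∀ x, f (g x) = fun i => ε i * f x i) (hχ : ∀ x, χ (g x) = s * χ x) (v : σ → R) :
    eval (fun i => ε i * v i) p = s * eval v p := by
  obtain ⟨x, rfl⟩ := hf v
  rw [← hfg, ← hp, ← hp, hχ]

end MvPolynomial

open MvPolynomial

theorem mod_two_eq_of_neg_one_pow_eq {m n : ℕ} (h : (-1 : ℂ) ^ m = (-1) ^ n) :
    m % 2 = n % 2 := by
  have : Even (m + n) := (neg_one_pow_eq_one_iff_even (by norm_num : (-1 : ℂ) ≠ 1)).mp <| by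
    rw [pow_add, h, ← mul_pow, neg_one_mul, neg_neg, one_pow]
  obtain ⟨r, hr⟩ := this
  omega

theorem rhoFun_neg (n : ℕ) (g : SL2) (l : ℕ) {k : ℕ} (hk : k ≤ n) :
    rhoFun n (-g) l k = (-1) ^ n * rhoFun n g l k := by
  simp only [rhoFun, SpecialLinearGroup.coe_neg, Matrix.neg_apply, map_neg, neg_mul, ← neg_add,
    map_mul, map_pow, aeval_X, Matrix.cons_val_zero, Matrix.cons_val_one]
  rw [neg_pow (C _ * X 0 + _), neg_pow (C _ * X 0 + _), mul_mul_mul_comm, ← pow_add,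
    Nat.add_sub_cancel' hk, ← C_1, ← C_neg, ← C_pow, coeff_C_mul]

theorem Tcoeff_neg_left (a b c : ℕ) (x₁ x₂ : SL2) (k p q : ℕ) :
    Tcoeff a b c (-x₁) x₂ k p q = (-1) ^ a * Tcoeff a b c x₁ x₂ k p q := by
  simp only [Tcoeff, Finset.mul_sum]
  refine Finset.sum_congr rfl fun p' hp' => Finset.sum_congr rfl fun q' _ => ?_
  rw [rhoFun_neg a x₁ p (Nat.lt_succ_iff.mp (Finset.mem_range.mp hp'))]
  ring

theorem Tcoeff_neg_right (a b c : ℕ) (x₁ x₂ : SL2) (k p q : ℕ) :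
    Tcoeff a b c x₁ (-x₂) k p q = (-1) ^ b * Tcoeff a b c x₁ x₂ k p q := by
  simp only [Tcoeff, Finset.mul_sum]
  refine Finset.sum_congr rfl fun p' _ => Finset.sum_congr rfl fun q' hq' => ?_
  rw [rhoFun_neg b x₂ q (Nat.lt_succ_iff.mp (Finset.mem_range.mp hq'))]
  ring

theorem centralFn_eq_mul_of_Tcoeff_eq_mul {a b c : ℕ} {x₁ x₂ y₁ y₂ : SL2} {s : ℂ}
    (h : ∀ k p q, Tcoeff a b c y₁ y₂ k p q = s * Tcoeff a b c x₁ x₂ k p q) :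
    centralFn a b c y₁ y₂ = s * centralFn a b c x₁ x₂ := by
  unfold centralFn
  split_ifs
  · simp only [h, Finset.mul_sum, mul_ite, mul_zero]
    congr! 5
    ring
  · rw [mul_zero]

theorem centralFn_neg_left (a b c : ℕ) (x₁ x₂ : SL2) :
    centralFn a b c (-x₁) x₂ = (-1) ^ a * centralFn a b c x₁ x₂ :=
  centralFn_eq_mul_of_Tcoeff_eq_mul (Tcoeff_neg_left a b c x₁ x₂)

theorem centralFn_neg_right (a b c : ℕ) (x₁ x₂ : SL2) :
    centralFn a b c x₁ (-x₂) = (-1) ^ b * centralFn a b c x₁ x₂ :=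
  centralFn_eq_mul_of_Tcoeff_eq_mul (Tcoeff_neg_right a b c x₁ x₂)

def traceCoords (x₁ x₂ : SL2) : Fin 3 → ℂ :=
  ![Matrix.trace (x₂ : Matrix (Fin 2) (Fin 2) ℂ),
    Matrix.trace (x₁ : Matrix (Fin 2) (Fin 2) ℂ),
    Matrix.trace ((x₁ * x₂⁻¹ : SL2) : Matrix (Fin 2) (Fin 2) ℂ)]

theorem traceCoords_neg_left (x₁ x₂ : SL2) :
    traceCoords (-x₁) x₂ = fun i => ![1, -1, -1] i * traceCoords x₁ x₂ i := by
  ext i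
  fin_cases i <;> simp [traceCoords, SpecialLinearGroup.coe_neg]

theorem traceCoords_neg_right (x₁ x₂ : SL2) :
    traceCoords x₁ (-x₂) = fun i => ![-1, 1, -1] i * traceCoords x₁ x₂ i := by
  ext i
  fin_cases i <;> simp [traceCoords, SpecialLinearGroup.coe_neg, inv_neg]

theorem traceCoords_surjective :
    Function.Surjective fun x : SL2 × SL2 => traceCoords x.1 x.2 := by
  intro v
  -- for `x₂ = !![y, t; -t⁻¹, 0]`, `tr (x₁ x₂⁻¹) = -(t + t⁻¹)`, so `t` must solve `t² + z t + 1 = 0`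
  obtain ⟨w, hw⟩ := IsAlgClosed.exists_eq_mul_self (discrim 1 (v 2) 1)
  obtain ⟨t, ht⟩ := exists_quadratic_eq_zero one_ne_zero ⟨w, hw⟩
  have ht0 : t ≠ 0 := by rintro rfl; simp at ht
  refine ⟨(⟨!![v 1, -1; 1, 0], by simp [Matrix.det_fin_two_of]⟩,
    ⟨!![v 0, t; -t⁻¹, 0], by simp [Matrix.det_fin_two_of, ht0]⟩), ?_⟩
  ext i
  fin_cases i
  · simp [traceCoords, Matrix.trace_fin_two_of]
  · simp [traceCoords, Matrix.trace_fin_two_of]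
  · show Matrix.trace (!![v 1, -1; 1, 0] * Matrix.adjugate !![v 0, t; -t⁻¹, 0]) = v 2
    rw [Matrix.adjugate_fin_two_of, Matrix.mul_fin_two, Matrix.trace_fin_two_of]
    field_simp
    linear_combination -ht

theorem centralFn_grading_general (a b c : ℕ) (p : MvPolynomial (Fin 3) ℂ)
    (hp : ∀ x₁ x₂ : SL2, centralFn a b c x₁ x₂ =
      MvPolynomial.eval
        ![Matrix.trace (x₂ : Matrix (Fin 2) (Fin 2) ℂ),
          Matrix.trace (x₁ : Matrix (Fin 2) (Fin 2) ℂ),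
          Matrix.trace ((x₁ * x₂⁻¹ : SL2) : Matrix (Fin 2) (Fin 2) ℂ)] p) :
    ∀ d ∈ p.support,
      (d 1 + d 2) % 2 = a % 2 ∧ (d 0 + d 2) % 2 = b % 2 := by
  intro d hd
  have hp' (x : SL2 × SL2) : centralFn a b c x.1 x.2 = eval (traceCoords x.1 x.2) p := hp x.1 x.2
  have hleft := prod_pow_eq_of_eval_mul_eq (eval_mul_eq_of_surjective traceCoords_surjective hp'
    (g := fun x => (-x.1, x.2)) (fun x => traceCoords_neg_left x.1 x.2)
    (fun x => centralFn_neg_left a b c x.1 x.2)) hd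
  have hright := prod_pow_eq_of_eval_mul_eq (eval_mul_eq_of_surjective traceCoords_surjective hp'
    (g := fun x => (x.1, -x.2)) (fun x => traceCoords_neg_right x.1 x.2)
    (fun x => centralFn_neg_right a b c x.1 x.2)) hd
  simp only [Finsupp.prod_pow, Fin.prod_univ_three, Matrix.cons_val_zero, Matrix.cons_val_one,
    Matrix.cons_val_two, Matrix.head_cons, Matrix.tail_cons, one_pow, one_mul, mul_one,
    ← pow_add] at hleft hright
  exact ⟨mod_two_eq_of_neg_one_pow_eq hleft, mod_two_eq_of_neg_one_pow_eq hright⟩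

/-- ℤ₂×ℤ₂-grading: if `χ_{a,b}^c = p(tr(x₂), tr(x₁), tr(x₁x₂⁻¹))` with `(a,b,c)`
admissible, then every monomial `y^j x^i z^k` occurring in `p` satisfies
`i + k ≡ a (mod 2)` and `j + k ≡ b (mod 2)`. -/
theorem centralFn_grading (a b c : ℕ) (h : Admissible a b c) (p : MvPolynomial (Fin 3) ℂ)
    (hp : ∀ x₁ x₂ : SL2, centralFn a b c x₁ x₂ =
      MvPolynomial.eval
        ![Matrix.trace (x₂ : Matrix (Fin 2) (Fin 2) ℂ),
          Matrix.trace (x₁ : Matrix (Fin 2) (Fin 2) ℂ),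
          Matrix.trace ((x₁ * x₂⁻¹ : SL2) : Matrix (Fin 2) (Fin 2) ℂ)] p) :
    ∀ d ∈ p.support,
      (d 1 + d 2) % 2 = a % 2 ∧ (d 0 + d 2) % 2 = b % 2 :=
  centralFn_grading_general a b c p hp

end
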